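/- The seven vector fields X¹,…,X⁷ satisfy the commutation relations [X¹,X²] = 2X¹, [X²,X⁴] = −X⁴, [X²,X⁵] = −X⁵, [X³,X⁴] = X⁵, [X³,X⁵] = −X⁴, [X³,X⁶] = 2X⁷, [X³,X⁷] = −2X⁶, [X⁴,X⁵] = 4X¹, [X⁴,X⁶] = −X⁴, [X⁴,X⁷] = −X⁵, [X⁵,X⁶] = X⁵, [X⁵,X⁷] = −X⁴, [X⁶,X⁷] = −2X³, and [Xⁱ,Xʲ] = 0 for every other pair 1 ≤ i < j ≤ 7 (namely (i,j) ∈ {(1,3),(1,4),(1,5),(1,6),(1,7),(2,3),(2,6),(2,7)}). In particular the ℝ-span of X¹,…,X⁷ is a real Lie algebra of vector fields. -/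

import Mathlib

open Complex

noncomputable section

def X1 : ℂ × ℂ × ℂ → ℂ × ℂ × ℂ := fun _ => (0, 0, I)
def X2 : ℂ × ℂ × ℂ → ℂ × ℂ × ℂ := fun p => (p.1, 0, 2 * p.2.2)
def X3 : ℂ × ℂ × ℂ → ℂ × ℂ × ℂ := fun p => (I * p.1, 2 * I * p.2.1, 0)
def X4 : ℂ × ℂ × ℂ → ℂ × ℂ × ℂ := fun p => (p.2.1 - 1, 0, -2 * p.1)
def X5 : ℂ × ℂ × ℂ → ℂ × ℂ × ℂ := fun p => (I + I * p.2.1, 0, -2 * I * p.1)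
def X6 : ℂ × ℂ × ℂ → ℂ × ℂ × ℂ := fun p => (p.1 * p.2.1, p.2.1 ^ 2 - 1, -p.1 ^ 2)
def X7 : ℂ × ℂ × ℂ → ℂ × ℂ × ℂ := fun p => (I * p.1 * p.2.1, I * p.2.1 ^ 2 + I, -I * p.1 ^ 2)

lemma fderiv_X1 (p : ℂ × ℂ × ℂ) : fderiv ℂ X1 p = 0 :=
  fderiv_const_apply _

lemma fderiv_X2_apply (p v : ℂ × ℂ × ℂ) : fderiv ℂ X2 p v = (v.1, 0, 2 * v.2.2) := by
  unfold X2
  simp (disch := fun_prop) [DifferentiableAt.fderiv_prodMk, fderiv_const_mul, fderiv.fst,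
    fderiv.snd]

lemma fderiv_X3_apply (p v : ℂ × ℂ × ℂ) : fderiv ℂ X3 p v = (I * v.1, 2 * I * v.2.1, 0) := by
  unfold X3
  simp (disch := fun_prop) [DifferentiableAt.fderiv_prodMk, fderiv_const_mul, fderiv.fst,
    fderiv.snd]

lemma fderiv_X4_apply (p v : ℂ × ℂ × ℂ) : fderiv ℂ X4 p v = (v.2.1, 0, -2 * v.1) := by
  unfold X4
  simp (disch := fun_prop) [DifferentiableAt.fderiv_prodMk, fderiv_const_mul, fderiv_fun_sub,
    fderiv.fst, fderiv.snd]

lemma fderiv_X5_apply (p v : ℂ × ℂ × ℂ) : fderiv ℂ X5 p v = (I * v.2.1, 0, -2 * I * v.1) := by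
  unfold X5
  simp (disch := fun_prop) [DifferentiableAt.fderiv_prodMk, fderiv_const_mul, fderiv.fst,
    fderiv.snd]

lemma fderiv_X6_apply (p v : ℂ × ℂ × ℂ) : fderiv ℂ X6 p v =
    (v.1 * p.2.1 + p.1 * v.2.1, 2 * p.2.1 * v.2.1, -(2 * p.1 * v.1)) := by
  unfold X6
  simp (disch := fun_prop) [DifferentiableAt.fderiv_prodMk, fderiv_fun_mul, fderiv_fun_pow,
    fderiv_fun_sub, fderiv.fst, fderiv.snd]
  ring

lemma fderiv_X7_apply (p v : ℂ × ℂ × ℂ) : fderiv ℂ X7 p v =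
    (I * v.1 * p.2.1 + I * p.1 * v.2.1, 2 * I * p.2.1 * v.2.1, -(2 * I * p.1 * v.1)) := by
  unfold X7
  ext <;> simp (disch := fun_prop) [DifferentiableAt.fderiv_prodMk, fderiv_fun_mul, fderiv_fun_pow,
    fderiv.fst, fderiv.snd] <;> ring

/-- The commutator table of the seven vector fields `X¹, …, X⁷`: the thirteen nonzero
brackets together with the eight vanishing ones, so that the `ℝ`-span of `X¹, …, X⁷`
is a real Lie algebra of vector fields on `ℂ³`. -/
theorem Xfield_commutator_table :
    VectorField.lieBracket ℂ X1 X2 = 2 • X1 ∧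
    VectorField.lieBracket ℂ X2 X4 = -X4 ∧
    VectorField.lieBracket ℂ X2 X5 = -X5 ∧
    VectorField.lieBracket ℂ X3 X4 = X5 ∧
    VectorField.lieBracket ℂ X3 X5 = -X4 ∧
    VectorField.lieBracket ℂ X3 X6 = 2 • X7 ∧
    VectorField.lieBracket ℂ X3 X7 = -(2 • X6) ∧
    VectorField.lieBracket ℂ X4 X5 = 4 • X1 ∧
    VectorField.lieBracket ℂ X4 X6 = -X4 ∧
    VectorField.lieBracket ℂ X4 X7 = -X5 ∧
    VectorField.lieBracket ℂ X5 X6 = X5 ∧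
    VectorField.lieBracket ℂ X5 X7 = -X4 ∧
    VectorField.lieBracket ℂ X6 X7 = -(2 • X3) ∧
    VectorField.lieBracket ℂ X1 X3 = 0 ∧
    VectorField.lieBracket ℂ X1 X4 = 0 ∧
    VectorField.lieBracket ℂ X1 X5 = 0 ∧
    VectorField.lieBracket ℂ X1 X6 = 0 ∧
    VectorField.lieBracket ℂ X1 X7 = 0 ∧
    VectorField.lieBracket ℂ X2 X3 = 0 ∧
    VectorField.lieBracket ℂ X2 X6 = 0 ∧
    VectorField.lieBracket ℂ X2 X7 = 0 := by
  and_intros <;> ext p <;>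
    simp only [VectorField.lieBracket_eq, fderiv_X1, fderiv_X2_apply, fderiv_X3_apply,
      fderiv_X4_apply, fderiv_X5_apply, fderiv_X6_apply, fderiv_X7_apply, X1, X2, X3, X4, X5, X6, X7,
      zero_apply, Pi.smul_apply, Pi.neg_apply, Pi.zero_apply, Prod.mk_sub_mk, Prod.smul_mk,
      Prod.neg_mk, Prod.zero_eq_mk] <;>
    grind [I_sq]
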